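/- For straight-line programs consisting only of skip, sequencing, and assignments of expressions, if two initial environments are low-equivalent, then the environments obtained after executing the program remain low-equivalent, assuming expression evaluation maps low-equivalent environments to values with equal flow counts and, when those flow counts are zero, equal values. -/
import Mathlib


abbrev Cnt := ℕ × ℕ × ℕ

def Cnt.join (a b : Cnt) : Cnt := (a.1 + b.1, a.2.1 + b.2.1, a.2.2 + b.2.2)

/-- κ₁ ⊑ κ₂ iff (κ₂ = (0,0,0) → κ₁ = (0,0,0)) -/
def Cnt.le (a b : Cnt) : Prop := b = ((0,0,0) : Cnt) → a = ((0,0,0) : Cnt)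

instance (a b : Cnt) : Decidable (Cnt.le a b) := by unfold Cnt.le; infer_instance

/-- join of all flow counts on a security stack -/
def stackJoin (t : List Cnt) : Cnt := t.foldr Cnt.join ((0,0,0) : Cnt)

/-- Δ(κ_old, κ_new, t) -/
def delta (kold knew : Cnt) (t : List Cnt) : Cnt :=
  ((if Cnt.le knew kold then 0 else 1),
   (if kold = ((0,0,0) : Cnt) ∧ stackJoin t ≠ ((0,0,0) : Cnt) then 1 else 0),
   0)

def lowEquiv {Name Val : Type} (ρ₁ ρ₂ : Name → Val × Cnt) : Prop :=
  ∀ x, (ρ₁ x).2 = (ρ₂ x).2 ∧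
    ((ρ₁ x).2 = ((0,0,0) : Cnt) → (ρ₁ x).1 = (ρ₂ x).1)

/-- Execute one assignment x := e with empty security stack. -/
def execAssign {Name Val Expr : Type} [DecidableEq Name]
    (eval : Expr → (Name → Val × Cnt) → Val × Cnt)
    (ρ : Name → Val × Cnt) (x : Name) (e : Expr) : Name → Val × Cnt :=
  fun y => if y = x then
    ((eval e ρ).1, Cnt.join (eval e ρ).2 (delta (ρ x).2 (eval e ρ).2 ([] : List Cnt)))
  else ρ y

/-- Execute a straight-line program (list of assignments). -/
def run {Name Val Expr : Type} [DecidableEq Name]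
    (eval : Expr → (Name → Val × Cnt) → Val × Cnt)
    (p : List (Name × Expr)) (ρ : Name → Val × Cnt) : Name → Val × Cnt :=
  p.foldl (fun ρ xe => execAssign eval ρ xe.1 xe.2) ρ


lemma step_preserves {Name Val Expr : Type} [DecidableEq Name]
    (eval : Expr → (Name → Val × Cnt) → Val × Cnt)
    (heval : ∀ (e : Expr) (ρ₁ ρ₂ : Name → Val × Cnt), lowEquiv ρ₁ ρ₂ →
      (eval e ρ₁).2 = (eval e ρ₂).2 ∧
      ((eval e ρ₁).2 = ((0,0,0) : Cnt) → (eval e ρ₁).1 = (eval e ρ₂).1))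
    (ρ₁ ρ₂ : Name → Val × Cnt) (h : lowEquiv ρ₁ ρ₂) (x : Name) (e : Expr) :
    lowEquiv (execAssign eval ρ₁ x e) (execAssign eval ρ₂ x e) := by
  intro y
  unfold execAssign
  by_cases hy : y = x
  · simp only [hy, if_pos rfl]
    obtain ⟨hk, hv⟩ := heval e ρ₁ ρ₂ h
    have hx := (h x).1
    constructor
    · simp [hk, hx]
    · intro hz
      apply hv
      have : (eval e ρ₁).2.1 = 0 ∧ (eval e ρ₁).2.2.1 = 0 ∧ (eval e ρ₁).2.2.2 = 0 := by
        have h1 := congrArg Prod.fst hz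
        have h2 := congrArg (fun p : Cnt => p.2.1) hz
        have h3 := congrArg (fun p : Cnt => p.2.2) hz
        simp [Cnt.join] at h1 h2 h3
        exact ⟨h1.1, h2.1, h3.1⟩
      obtain ⟨a, b, c⟩ := this
      exact Prod.ext a (Prod.ext b c)
  · simp only [if_neg hy]
    exact h y

theorem straightline_preserves_lowEquiv {Name Val Expr : Type} [DecidableEq Name]
    (eval : Expr → (Name → Val × Cnt) → Val × Cnt)
    (heval : ∀ (e : Expr) (ρ₁ ρ₂ : Name → Val × Cnt), lowEquiv ρ₁ ρ₂ →
      (eval e ρ₁).2 = (eval e ρ₂).2 ∧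
      ((eval e ρ₁).2 = ((0,0,0) : Cnt) → (eval e ρ₁).1 = (eval e ρ₂).1))
    (p : List (Name × Expr)) (ρ₁ ρ₂ : Name → Val × Cnt)
    (h : lowEquiv ρ₁ ρ₂) :
    lowEquiv (run eval p ρ₁) (run eval p ρ₂) := by
    induction p generalizing ρ₁ ρ₂ with
  | nil => exact h
  | cons xe rest ih =>
    exact ih _ _ (step_preserves eval heval ρ₁ ρ₂ h xe.1 xe.2)
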